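/- arXiv:1402.5492 — 2 statements merged into one kernel-verified Lean document; each statement's English description precedes it below -/
import Mathlib

section
/- Monotonicity of cache-oblivious runtime in block size at fixed number of blocks: if T(M,B) counts, for a fixed primitive-operation sequence, the number of operations whose target block (in the partition of the array into size-B blocks) is not among the M/B most recently touched blocks, then for B' ≤ B'' with B' dividing B'' and M'/B' = M''/B'', one has T(M',B') ≥ T(M'',B''). -/
/-!
Block `b` of size `B'` lies inside block `b / k` of size `B' * k`. If an access hits in the
fine cache, its fine block `b` was touched since the last touch of `b` by fewer than `M' / B'`
other distinct fine blocks; the coarse blocks touched since the last touch of `b / k` are images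
of a subset of those, so there are no more of them, and the access also hits in the coarse cache
holding the same number of blocks. Summing over the accesses gives the inequality.
-/

/-- `hit m past b` : block `b` is among the `m` most recently touched blocks,
    where `past` lists the previously touched blocks, most recent first. -/
def hit (m : ℕ) (past : List ℕ) (b : ℕ) : Bool :=
  past.contains b && decide ((past.takeWhile (fun x => x ≠ b)).dedup.length + 1 ≤ m)

/-- Cost of executing the remaining accesses `seq` (cell addresses), given the
    list `past` of previously touched blocks (most recent first), with a cache of
    `m` blocks of size `B` each: an access costs `1` iff its block is not among
    the `m` most recently touched blocks. -/
def costAux (m B : ℕ) : List ℕ → List ℕ → ℕ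
  | _, [] => 0
  | past, a :: rest =>
      (if hit m past (a / B) then 0 else 1) + costAux m B ((a / B) :: past) rest

/-- `T M B seq` : number of cache misses for the fixed primitive-operation
    sequence `seq` in the ideal-cache (LRU) model with memory `M` and block size
    `B`, starting from an empty memory. -/
def T (M B : ℕ) (seq : List ℕ) : ℕ := costAux (M / B) B [] seq

namespace List

variable {α β : Type*}

theorem takeWhile_prefix_takeWhile_of_imp {p q : α → Bool} (h : ∀ a, p a → q a) (l : List α) :
    l.takeWhile p <+: l.takeWhile q := by
  have hpq : (fun a => p a && q a) = p := by
    funext a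
    by_cases hp : p a <;> simp [hp, h a]
  simpa [takeWhile_takeWhile, hpq] using takeWhile_prefix p (l := l.takeWhile q)

variable [DecidableEq α] [DecidableEq β]

theorem length_dedup_map_le (f : α → β) (l : List α) :
    (l.map f).dedup.length ≤ l.dedup.length := by
  simp only [← List.card_toFinset]
  calc (l.map f).toFinset.card = (l.toFinset.image f).card := by
        congr 1
        ext
        simp
    _ ≤ l.toFinset.card := Finset.card_image_le

theorem Sublist.length_dedup_le {l₁ l₂ : List α} (h : l₁ <+ l₂) :
    l₁.dedup.length ≤ l₂.dedup.length := by
  simp only [← List.card_toFinset]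
  exact Finset.card_le_card fun x hx => by simpa using h.subset (by simpa using hx)

theorem length_dedup_takeWhile_map_ne_le (f : α → β) (l : List α) (b : α) :
    ((l.map f).takeWhile (· ≠ f b)).dedup.length ≤ (l.takeWhile (· ≠ b)).dedup.length := by
  rw [takeWhile_map]
  refine (length_dedup_map_le f _).trans (Sublist.length_dedup_le ?_)
  refine (takeWhile_prefix_takeWhile_of_imp (fun a ha => ?_) l).sublist
  simp only [Function.comp_apply, decide_eq_true_eq] at ha ⊢
  exact fun hab => ha (congrArg f hab)

end List

theorem hit_map (m : ℕ) (f : ℕ → ℕ) {past : List ℕ} {b : ℕ} (h : hit m past b) :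
    hit m (past.map f) (f b) := by
  simp only [hit, Bool.and_eq_true, decide_eq_true_eq, List.elem_iff] at h ⊢
  exact ⟨List.mem_map_of_mem h.1,
    (Nat.add_le_add_right (List.length_dedup_takeWhile_map_ne_le f past b) 1).trans h.2⟩

theorem costAux_map_le (m : ℕ) {B B' : ℕ} (f : ℕ → ℕ) (hf : ∀ a, a / B' = f (a / B))
    (seq past : List ℕ) : costAux m B' (past.map f) seq ≤ costAux m B past seq := by
  induction seq generalizing past with
  | nil => simp [costAux]
  | cons a rest ih =>
    simp only [costAux, hf a]
    refine Nat.add_le_add ?_ (ih (a / B :: past))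
    by_cases hhit : hit m past (a / B)
    · simp [hit_map m f hhit]
    · rw [if_neg hhit]
      split <;> simp

theorem cost_mono_block_size_general (seq : List ℕ) (M' B' M'' B'' : ℕ)
    (hdvd : B' ∣ B'')
    (hm : M' / B' = M'' / B'') :
    T M'' B'' seq ≤ T M' B' seq := by
  obtain ⟨k, rfl⟩ := hdvd
  simpa [T, hm] using
    costAux_map_le (M'' / (B' * k)) (· / k) (fun a => (Nat.div_div_eq_div_mul a B' k).symm) seq []

/-- Monotonicity of cache-oblivious runtime in the block size at a fixed number
    of blocks: for `B' ≤ B''` with `B'` dividing `B''` and `M'/B' = M''/B''`,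
    one has `T(M', B') ≥ T(M'', B'')`. -/
theorem cost_mono_block_size (seq : List ℕ) (M' B' M'' B'' : ℕ)
    (hB' : 0 < B') (hle : B' ≤ B'') (hdvd : B' ∣ B'')
    (hm : M' / B' = M'' / B'') :
    T M'' B'' seq ≤ T M' B' seq :=
  cost_mono_block_size_general seq M' B' M'' B'' hdvd hm
end

section
/- In a tree in which each node has at most 3 children, where at every moment each node has at most 2 'open' children, closing all open rectangles in the subtree of a node at height h by traversing only open nodes visits a binary tree of height at most h and thus touches at most 2^(h+1) - 1 nodes, occupying O(2^h / B^((1-ε)/log 3)) blocks under the vEB layout. -/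
open Real

/-- A rooted tree whose nodes carry an `open` flag. -/
inductive OTree : Type
  | leaf (opn : Bool) : OTree
  | node (opn : Bool) (children : List OTree) : OTree

namespace OTree

def isOpen : OTree → Bool
  | .leaf b => b
  | .node b _ => b

def height : OTree → ℕ
  | .leaf _ => 0
  | .node _ cs => 1 + (cs.attach.map (fun c => height c.1)).foldr max 0
decreasing_by
  simp only [OTree.node.sizeOf_spec]
  have := List.sizeOf_lt_of_mem c.2
  omega

/-- Number of nodes visited when traversing only open nodes from the root
    (a node is visited iff it and all its ancestors are open). -/
def openVisited : OTree → ℕ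
  | .leaf b => if b then 1 else 0
  | .node b cs =>
      if b then 1 + (cs.attach.map (fun c => openVisited c.1)).sum else 0
decreasing_by
  simp only [OTree.node.sizeOf_spec]
  have := List.sizeOf_lt_of_mem c.2
  omega

/-- Each node has at most 3 children, of which at most 2 are open. -/
inductive Valid : OTree → Prop
  | leaf (b : Bool) : Valid (.leaf b)
  | node (b : Bool) (cs : List OTree)
      (h3 : cs.length ≤ 3)
      (h2 : (cs.filter (fun c => isOpen c)).length ≤ 2)
      (hrec : ∀ c ∈ cs, Valid c) : Valid (.node b cs)

end OTree

/-!
Every visited node is open, and each node has at most two open children, so the visited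
nodes form a binary tree of height at most `h`: the count `N(h) ≤ 1 + 2 N(h - 1)` gives
`N(h) ≤ 2^(h+1) - 1`. For the block count, the hypothesis `B^((1-ε)/log₂ 3) ≤ 2^h` makes
the ratio `x = 2^h / B^((1-ε)/log₂ 3)` at least `1`, so `C₀ (1 + x) ≤ 2 C₀ x`.
-/

namespace OTree

lemma openVisited_eq_zero_of_isOpen_eq_false {t : OTree} (ht : isOpen t = false) :
    openVisited t = 0 := by
  cases t <;> simp_all [isOpen, openVisited]

lemma openVisited_node_of_isOpen (cs : List OTree) :
    openVisited (.node true cs) = 1 + (cs.map openVisited).sum := by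
  rw [openVisited, if_pos rfl, List.map_attach_eq_pmap, List.pmap_eq_map]

lemma height_lt_height_node {c : OTree} {cs : List OTree} (b : Bool) (hc : c ∈ cs) :
    height c < height (.node b cs) := by
  rw [height]
  have : height c ≤ (cs.attach.map (fun c => height c.1)).foldr max 0 :=
    List.le_max_of_le' 0 (List.mem_map.mpr ⟨⟨c, hc⟩, List.mem_attach _ _, rfl⟩) le_rfl
  omega

/-- Closed children contribute nothing, so only the open ones count against the bound `M`. -/
lemma sum_openVisited_le {cs : List OTree} {M : ℕ} (hM : ∀ c ∈ cs, openVisited c ≤ M) :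
    (cs.map openVisited).sum ≤ (cs.filter (fun c => isOpen c)).length * M := by
  induction cs with
  | nil => simp
  | cons c cs ih =>
    have ih := ih fun x hx => hM x (List.mem_cons_of_mem _ hx)
    cases hc : isOpen c
    · simp only [List.map_cons, List.sum_cons, List.filter_cons, hc,
        openVisited_eq_zero_of_isOpen_eq_false hc]
      simpa using ih
    · simp only [List.map_cons, List.sum_cons, List.filter_cons, hc, if_true, List.length_cons]
      have := hM c List.mem_cons_self
      rw [add_one_mul]
      omega

theorem openVisited_add_one_le_two_pow {t : OTree} (hv : Valid t) {h : ℕ}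
    (hh : height t ≤ h) : openVisited t + 1 ≤ 2 ^ (h + 1) := by
  induction hv generalizing h with
  | leaf b =>
    have : 2 ≤ 2 ^ (h + 1) := Nat.le_self_pow (Nat.succ_ne_zero h) 2
    cases b <;> simp only [openVisited, Bool.false_eq_true, ↓reduceIte] <;> omega
  | node b cs _ hopen _ ih =>
    cases b
    · simpa [openVisited] using Nat.one_le_two_pow
    obtain ⟨k, rfl⟩ : ∃ k, h = k + 1 := Nat.exists_eq_add_one.mpr (by
      have : 0 < height (.node true cs) := by rw [height]; omega
      omega)
    have hchild : ∀ c ∈ cs, openVisited c ≤ 2 ^ (k + 1) - 1 := fun c hc => by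
      have := ih c hc (h := k) (by have := height_lt_height_node true hc; omega)
      omega
    have hsum := (sum_openVisited_le hchild).trans (Nat.mul_le_mul_right _ hopen)
    have : 1 ≤ 2 ^ (k + 1) := Nat.one_le_two_pow
    rw [openVisited_node_of_isOpen, pow_succ]
    omega

end OTree

lemma le_two_mul_mul_of_le_mul_one_add {C₀ x y : ℝ} (hC₀ : 0 ≤ C₀) (hx : 1 ≤ x)
    (hy : y ≤ C₀ * (1 + x)) : y ≤ 2 * C₀ * x := by
  nlinarith

/-- In a tree in which each node has at most 3 children and at most 2 open
    children, closing all open rectangles in the subtree of a node at height `h`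
    by traversing only open nodes visits an (induced binary) set of at most
    `2^(h+1) - 1` nodes; under the vEB layout, where an induced binary tree of
    height `h` occupies at most `C₀·(1 + 2^h/B^((1-ε)/log₂3))` blocks, these
    nodes occupy `O(2^h / B^((1-ε)/log 3))` blocks. -/
theorem close_open_rectangles_cost (t : OTree) (h : ℕ)
    (hv : OTree.Valid t) (hh : OTree.height t ≤ h) :
    OTree.openVisited t ≤ 2 ^ (h + 1) - 1 ∧
    ∀ C₀ : ℝ, 0 < C₀ → ∃ C : ℝ, 0 < C ∧
      ∀ (B ε blocks : ℝ), 2 ≤ B → 0 < ε → ε < 1 →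
        B ^ ((1 - ε) / Real.logb 2 3) ≤ (2 : ℝ) ^ h →
        blocks ≤ C₀ * (1 + (2 : ℝ) ^ h / B ^ ((1 - ε) / Real.logb 2 3)) →
        blocks ≤ C * ((2 : ℝ) ^ h / B ^ ((1 - ε) / Real.logb 2 3)) := by
  refine ⟨?_, fun C₀ hC₀ => ⟨2 * C₀, by positivity, ?_⟩⟩
  · have := OTree.openVisited_add_one_le_two_pow hv hh
    omega
  · intro B ε blocks hB _ _ hle hblocks
    have hx := (one_le_div (Real.rpow_pos_of_pos (by linarith) _)).mpr hle
    exact le_two_mul_mul_of_le_mul_one_add hC₀.le hx hblocks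
end
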